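/- arXiv:1702.00765 — 2 statements merged into one kernel-verified Lean document; each statement's English description precedes it below -/
import Mathlib

section
/- Let p be a trigonometric polynomial and φ̂ ∈ 𝓜(λ). Then p̂·φ̂ ∈ 𝓜(λ) and ∫_𝕋 p(w̄) M_{φ̂_w} dw = M_{p̂·φ̂}, where the integral is with respect to normalized Lebesgue measure on 𝕋 and is defined in the strong sense. -/
open Filter Finset Classical

set_option linter.unusedVariables false
open scoped ComplexConjugate ENNReal

noncomputable section
attribute [local instance] Classical.propDecidable

/-- A countably infinite rooted directed tree, encoded by the parent function
(with the convention `par root = root`) and the depth function `|·|`. -/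
structure DirTree (V : Type*) where
  root : V
  par : V → V
  depth : V → ℕ
  par_root : par root = root
  depth_eq_zero : ∀ v, depth v = 0 ↔ v = root
  depth_par : ∀ v, v ≠ root → depth (par v) + 1 = depth v

variable {V : Type*}

/-- The tree is leafless: every vertex has a child. -/
def DirTree.Leafless (T : DirTree V) : Prop :=
  ∀ u : V, ∃ v : V, v ≠ T.root ∧ T.par v = u

/-- `wProd T lam v k = λ_{par^k(v)|v}`, the product of the weights along `k` steps up from `v`. -/
def wProd (T : DirTree V) (lam : V → ℂ) (v : V) (k : ℕ) : ℂ :=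
  ∏ n ∈ Finset.range k, lam (T.par^[n] v)

/-- `(Γ_φ f)(v) = ∑_{k=0}^{|v|} λ_{par^k(v)|v} φ(k) f(par^k(v))`. -/
def Gamma (T : DirTree V) (lam : V → ℂ) (φ : ℕ → ℂ) (f : V → ℂ) (v : V) : ℂ :=
  ∑ k ∈ Finset.range (T.depth v + 1), wProd T lam v k * φ k * f (T.par^[k] v)

/-- `S` is the weighted shift `S_λ` on `ℓ²(V)`. -/
def IsShift (T : DirTree V) (lam : V → ℝ)
    (S : lp (fun _ : V => ℂ) 2 →L[ℂ] lp (fun _ : V => ℂ) 2) : Prop :=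
  ∀ f : lp (fun _ : V => ℂ) 2, ∀ v : V,
    S f v = if v = T.root then 0 else (lam v : ℂ) * f (T.par v)

/-- `M` is the (bounded, everywhere defined) multiplication operator `M_φ` with symbol `φ`;
the existence of such an `M` is equivalent to `φ ∈ 𝓜(λ)`. -/
def IsMultOp (T : DirTree V) (lam : V → ℝ) (φ : ℕ → ℂ)
    (M : lp (fun _ : V => ℂ) 2 →L[ℂ] lp (fun _ : V => ℂ) 2) : Prop :=
  ∀ f : lp (fun _ : V => ℂ) 2, ∀ v : V,
    M f v = Gamma T (fun u => (lam u : ℂ)) φ (⇑f) v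


/-!
Write `D_w` for the diagonal unitary `f ↦ w ^ |·| * f` of `ℓ²(V)`. Comparing the sums defining
`Γ` gives `M_{φ̂_w} = D_w M_φ̂ D_w⁻¹`, so `θ ↦ p(e^{-iθ}) M_{φ̂_{e^{iθ}}} f` is bounded by
`(∑ |c_j|) ‖M_φ̂‖ ‖f‖`; its coordinates are continuous and `V` is countable, so it is Bochner
integrable and may be integrated coordinatewise. In the coordinate `v` the integrand is `Γ`
with symbol `k ↦ p(e^{-iθ}) e^{ikθ} φ̂(k)`, whose mean over the circle is `p̂(k) φ̂(k)` by
orthogonality of the characters. Hence the integral is a bounded operator acting as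
`Γ_{p̂φ̂}`, i.e. it is `M_{p̂φ̂}`.
-/

open MeasureTheory

namespace DirTree

variable (T : DirTree V)

lemma depth_iterate_par_add {k : ℕ} {v : V} (hk : k ≤ T.depth v) :
    T.depth (T.par^[k] v) + k = T.depth v := by
  induction k with
  | zero => rfl
  | succ k ih =>
    have hk' := ih (by omega)
    have hne : T.par^[k] v ≠ T.root := fun h => by
      rw [h, (T.depth_eq_zero _).mpr rfl] at hk'
      omega
    rw [Function.iterate_succ_apply', ← T.depth_par _ hne] at *
    omega

def depthPhase (w : Circle) (f : lp (fun _ : V => ℂ) 2) : lp (fun _ : V => ℂ) 2 :=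
  ⟨fun v => (w : ℂ) ^ T.depth v * f v,
    Memℓp.of_norm (by simpa only [norm_mul, norm_pow, Circle.norm_coe, one_pow, one_mul]
      using (lp.memℓp f).norm)⟩

@[simp] lemma depthPhase_apply (w : Circle) (f : lp (fun _ : V => ℂ) 2) (v : V) :
    T.depthPhase w f v = (w : ℂ) ^ T.depth v * f v := rfl

lemma norm_depthPhase (w : Circle) (f : lp (fun _ : V => ℂ) 2) : ‖T.depthPhase w f‖ = ‖f‖ := by
  simp only [lp.norm_eq_tsum_rpow (by norm_num : 0 < (2 : ℝ≥0∞).toReal), depthPhase_apply,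
    norm_mul, norm_pow, Circle.norm_coe, one_pow, one_mul]

end DirTree

open DirTree

lemma IsMultOp.apply_eq_depthPhase {T : DirTree V} {lam : V → ℝ} {φ : ℕ → ℂ}
    {M Mw : lp (fun _ : V => ℂ) 2 →L[ℂ] lp (fun _ : V => ℂ) 2} {w : Circle}
    (hM : IsMultOp T lam φ M) (hMw : IsMultOp T lam (fun n => (w : ℂ) ^ n * φ n) Mw)
    (f : lp (fun _ : V => ℂ) 2) :
    Mw f = T.depthPhase w (M (T.depthPhase w⁻¹ f)) := by
  ext v
  rw [depthPhase_apply, hMw, hM, Gamma, Gamma, Finset.mul_sum]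
  refine Finset.sum_congr rfl fun k hk => ?_
  have hdepth := T.depth_iterate_par_add (Nat.lt_succ_iff.mp (Finset.mem_range.mp hk))
  rw [depthPhase_apply, ← hdepth, Circle.coe_inv, pow_add, inv_pow]
  field_simp [Circle.coe_ne_zero]

lemma IsMultOp.norm_apply_le_of_rotate {T : DirTree V} {lam : V → ℝ} {φ : ℕ → ℂ}
    {M Mw : lp (fun _ : V => ℂ) 2 →L[ℂ] lp (fun _ : V => ℂ) 2} {w : Circle}
    (hM : IsMultOp T lam φ M) (hMw : IsMultOp T lam (fun n => (w : ℂ) ^ n * φ n) Mw)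
    (f : lp (fun _ : V => ℂ) 2) : ‖Mw f‖ ≤ ‖M‖ * ‖f‖ := by
  rw [hM.apply_eq_depthPhase hMw, norm_depthPhase, ← T.norm_depthPhase w⁻¹ f]
  exact M.le_opNorm _

section Gamma

variable (T : DirTree V) (lam : V → ℂ)

lemma Gamma_add (φ : ℕ → ℂ) (f g : V → ℂ) (v : V) :
    Gamma T lam φ (f + g) v = Gamma T lam φ f v + Gamma T lam φ g v := by
  simp only [Gamma, Pi.add_apply, mul_add, Finset.sum_add_distrib]

lemma Gamma_smul (φ : ℕ → ℂ) (a : ℂ) (f : V → ℂ) (v : V) :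
    Gamma T lam φ (a • f) v = a * Gamma T lam φ f v := by
  simp only [Gamma, Pi.smul_apply, smul_eq_mul, Finset.mul_sum]
  exact Finset.sum_congr rfl fun _ _ => by ring

lemma mul_Gamma (a : ℂ) (φ : ℕ → ℂ) (f : V → ℂ) (v : V) :
    a * Gamma T lam φ f v = Gamma T lam (fun k => a * φ k) f v := by
  simp only [Gamma, Finset.mul_sum]
  exact Finset.sum_congr rfl fun _ _ => by ring

lemma continuous_Gamma {ψ : ℝ → ℕ → ℂ} (hψ : ∀ k, Continuous fun θ => ψ θ k)
    (f : V → ℂ) (v : V) : Continuous fun θ => Gamma T lam (ψ θ) f v :=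
  continuous_finsetSum _ fun k _ => (continuous_const.mul (hψ k)).mul continuous_const

lemma intervalIntegral_Gamma {a b : ℝ} {ψ : ℝ → ℕ → ℂ}
    (hψ : ∀ k, IntervalIntegrable (fun θ => ψ θ k) volume a b) (f : V → ℂ) (v : V) :
    ∫ θ in a..b, Gamma T lam (ψ θ) f v = Gamma T lam (fun k => ∫ θ in a..b, ψ θ k) f v := by
  unfold Gamma
  rw [intervalIntegral.integral_finsetSum fun k _ => ((hψ k).const_mul _).mul_const _]
  simp only [intervalIntegral.integral_mul_const, intervalIntegral.integral_const_mul]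

end Gamma

lemma exists_isMultOp_of_apply_eq {T : DirTree V} {lam : V → ℝ} {ψ : ℕ → ℂ}
    (Φ : lp (fun _ : V => ℂ) 2 → lp (fun _ : V => ℂ) 2)
    (hΦ : ∀ f v, Φ f v = Gamma T (fun u => (lam u : ℂ)) ψ f v) (K : ℝ)
    (hK : ∀ f, ‖Φ f‖ ≤ K * ‖f‖) :
    ∃ Mp : lp (fun _ : V => ℂ) 2 →L[ℂ] lp (fun _ : V => ℂ) 2,
      IsMultOp T lam ψ Mp ∧ ∀ f, Mp f = Φ f := by
  let L : lp (fun _ : V => ℂ) 2 →ₗ[ℂ] lp (fun _ : V => ℂ) 2 :=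
    { toFun := Φ
      map_add' := fun f g => by ext v; simp only [hΦ, lp.coeFn_add, Gamma_add, Pi.add_apply]
      map_smul' := fun a f => by
        ext v
        simp only [hΦ, lp.coeFn_smul, Gamma_smul, Pi.smul_apply, smul_eq_mul, RingHom.id_apply] }
  exact ⟨L.mkContinuous K hK, fun f v => hΦ f v, fun f => rfl⟩

namespace lp

variable {ι : Type*} {E : ι → Type*} [∀ i, NormedAddCommGroup (E i)] {p : ℝ≥0∞} [Fact (1 ≤ p)]

lemma stronglyMeasurable_of_apply [Countable ι] {α : Type*} [MeasurableSpace α] (hp : p ≠ ⊤)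
    {F : α → lp E p} (hF : ∀ i, StronglyMeasurable fun a => F a i) : StronglyMeasurable F :=
  stronglyMeasurable_of_tendsto (f := fun s a => ∑ i ∈ s, lp.single p i (F a i)) atTop
    (fun s => Finset.stronglyMeasurable_fun_sum s fun i _ =>
      (isometry_single i).continuous.comp_stronglyMeasurable (hF i))
    (tendsto_pi_nhds.mpr fun a => lp.hasSum_single hp (F a))

lemma intervalIntegrable_of_continuous_apply [Countable ι] (hp : p ≠ ⊤)
    {F : ℝ → lp E p} (hF : ∀ i, Continuous fun θ => F θ i) {C : ℝ} (hC : ∀ θ, ‖F θ‖ ≤ C)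
    (a b : ℝ) : IntervalIntegrable F volume a b :=
  (continuous_const.intervalIntegrable a b).mono_fun'
    (stronglyMeasurable_of_apply hp fun i => (hF i).stronglyMeasurable).aestronglyMeasurable
    (ae_of_all _ hC)

variable [∀ i, NormedSpace ℝ (E i)] [∀ i, CompleteSpace (E i)]

lemma intervalIntegral_apply {F : ℝ → lp E p} {a b : ℝ} (hF : IntervalIntegrable F volume a b)
    (i : ι) : (∫ θ in a..b, F θ) i = ∫ θ in a..b, F θ i :=
  ((evalCLM ℝ E p i).intervalIntegral_comp_comm hF).symm

end lp

lemma continuous_coe_circleExp_zpow (m : ℤ) :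
    Continuous fun θ : ℝ => ((Circle.exp θ ^ m : Circle) : ℂ) :=
  continuous_subtype_val.comp ((map_continuous Circle.exp).zpow m)

lemma integral_circleExp_zpow (m : ℤ) :
    ∫ θ in (0 : ℝ)..2 * Real.pi, ((Circle.exp θ ^ m : Circle) : ℂ)
      = if m = 0 then ((2 * Real.pi : ℝ) : ℂ) else 0 := by
  split_ifs with hm
  · simp [hm]
  · have hc : (m : ℂ) * Complex.I ≠ 0 := by simp [hm]
    have hexp : ∀ θ : ℝ, ((Circle.exp θ ^ m : Circle) : ℂ) = Complex.exp ((m * Complex.I) * θ) :=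
      fun θ => by rw [← Circle.exp_intCast_mul, Circle.coe_exp]; push_cast; ring_nf
    simp only [hexp, integral_exp_mul_complex hc, Complex.ofReal_zero, mul_zero, Complex.exp_zero]
    rw [show (m : ℂ) * Complex.I * ((2 * Real.pi : ℝ) : ℂ) = m * (2 * Real.pi * Complex.I) by
      push_cast; ring, Complex.exp_int_mul_two_pi_mul_I, sub_self, zero_div]

section TrigPoly

variable {N : ℕ} {c : ℤ → ℂ} {p : ℂ → ℂ}

lemma trigPoly_conj_circle
    (hp : ∀ z : ℂ, z ≠ 0 → p z = ∑ k ∈ Finset.Icc (-(N : ℤ)) N, c k * z ^ k) (w : Circle) :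
    p (conj (w : ℂ)) = ∑ j ∈ Finset.Icc (-(N : ℤ)) N, c j * ((w ^ (-j) : Circle) : ℂ) := by
  rw [← Circle.coe_inv_eq_conj, hp _ (Circle.coe_ne_zero _)]
  simp only [Circle.coe_zpow, Circle.coe_inv, inv_zpow, zpow_neg]

lemma norm_trigPoly_conj_circle_le
    (hp : ∀ z : ℂ, z ≠ 0 → p z = ∑ k ∈ Finset.Icc (-(N : ℤ)) N, c k * z ^ k) (w : Circle) :
    ‖p (conj (w : ℂ))‖ ≤ ∑ j ∈ Finset.Icc (-(N : ℤ)) N, ‖c j‖ := by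
  rw [trigPoly_conj_circle hp]
  refine (norm_sum_le _ _).trans (Finset.sum_le_sum fun j _ => ?_)
  rw [norm_mul, Circle.norm_coe, mul_one]

lemma continuous_trigPoly_conj_circleExp
    (hp : ∀ z : ℂ, z ≠ 0 → p z = ∑ k ∈ Finset.Icc (-(N : ℤ)) N, c k * z ^ k) :
    Continuous fun θ : ℝ => p (conj (Circle.exp θ : ℂ)) := by
  simp only [trigPoly_conj_circle hp]
  exact continuous_finsetSum _ fun j _ => continuous_const.mul (continuous_coe_circleExp_zpow _)

lemma integral_trigPoly_conj_circleExp_mul_pow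
    (hp : ∀ z : ℂ, z ≠ 0 → p z = ∑ k ∈ Finset.Icc (-(N : ℤ)) N, c k * z ^ k) (k : ℕ) :
    ∫ θ in (0 : ℝ)..2 * Real.pi, p (conj (Circle.exp θ : ℂ)) * (Circle.exp θ : ℂ) ^ k
      = ((2 * Real.pi : ℝ) : ℂ) * if (k : ℤ) ≤ N then c k else 0 := by
  have hexpand : ∀ θ : ℝ, p (conj (Circle.exp θ : ℂ)) * (Circle.exp θ : ℂ) ^ k
      = ∑ j ∈ Finset.Icc (-(N : ℤ)) N, c j * ((Circle.exp θ ^ ((k : ℤ) - j) : Circle) : ℂ) := by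
    intro θ
    rw [trigPoly_conj_circle hp, Finset.sum_mul]
    refine Finset.sum_congr rfl fun j _ => ?_
    rw [mul_assoc, ← Circle.coe_pow, ← Circle.coe_mul, ← zpow_natCast, ← zpow_add, neg_add_eq_sub]
  simp only [hexpand]
  rw [intervalIntegral.integral_finsetSum fun j _ =>
    ((continuous_coe_circleExp_zpow ((k : ℤ) - j)).const_mul (c j)).intervalIntegrable _ _]
  simp only [intervalIntegral.integral_const_mul, integral_circleExp_zpow, sub_eq_zero, mul_ite,
    mul_zero, eq_comm (a := (k : ℤ)), Finset.sum_ite_eq', Finset.mem_Icc]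
  split_ifs with hmem hk hk
  · ring
  · exact absurd hmem.2 hk
  · exact absurd ⟨by omega, hk⟩ hmem
  · ring

end TrigPoly

section CircleMean

variable {T : DirTree V} {lam : V → ℝ} {φ : ℕ → ℂ}
  {M : lp (fun _ : V => ℂ) 2 →L[ℂ] lp (fun _ : V => ℂ) 2}
  {Mfam : ℂ → (lp (fun _ : V => ℂ) 2 →L[ℂ] lp (fun _ : V => ℂ) 2)} {N : ℕ} {c : ℤ → ℂ}
  {p : ℂ → ℂ}

lemma continuous_trigPoly_conj_circleExp_mul_pow_mul
    (hp : ∀ z : ℂ, z ≠ 0 → p z = ∑ k ∈ Finset.Icc (-(N : ℤ)) N, c k * z ^ k) (k : ℕ) :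
    Continuous fun θ : ℝ => p (conj (Circle.exp θ : ℂ)) * (Circle.exp θ : ℂ) ^ k * φ k :=
  ((continuous_trigPoly_conj_circleExp hp).mul
    ((continuous_subtype_val.comp (map_continuous Circle.exp)).pow k)).mul continuous_const

lemma trigPoly_smul_rotate_apply
    (hMfam : ∀ w : Circle, IsMultOp T lam (fun n => (w : ℂ) ^ n * φ n) (Mfam w))
    (f : lp (fun _ : V => ℂ) 2) (θ : ℝ) (v : V) :
    (p (conj (Circle.exp θ : ℂ)) • Mfam (Circle.exp θ) f) v = Gamma T (fun u => (lam u : ℂ))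
      (fun k => p (conj (Circle.exp θ : ℂ)) * (Circle.exp θ : ℂ) ^ k * φ k) f v := by
  simp only [lp.coeFn_smul, Pi.smul_apply, smul_eq_mul, hMfam _ f v, mul_Gamma, mul_assoc]

lemma norm_trigPoly_smul_rotate_le (hM : IsMultOp T lam φ M)
    (hMfam : ∀ w : Circle, IsMultOp T lam (fun n => (w : ℂ) ^ n * φ n) (Mfam w))
    (hp : ∀ z : ℂ, z ≠ 0 → p z = ∑ k ∈ Finset.Icc (-(N : ℤ)) N, c k * z ^ k)
    (f : lp (fun _ : V => ℂ) 2) (θ : ℝ) :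
    ‖p (conj (Circle.exp θ : ℂ)) • Mfam (Circle.exp θ) f‖
      ≤ (∑ j ∈ Finset.Icc (-(N : ℤ)) N, ‖c j‖) * (‖M‖ * ‖f‖) := by
  rw [norm_smul]
  exact mul_le_mul (norm_trigPoly_conj_circle_le hp _) (hM.norm_apply_le_of_rotate (hMfam _) f)
    (norm_nonneg _) (Finset.sum_nonneg fun _ _ => norm_nonneg _)

lemma intervalIntegrable_trigPoly_smul_rotate [Countable V] (hM : IsMultOp T lam φ M)
    (hMfam : ∀ w : Circle, IsMultOp T lam (fun n => (w : ℂ) ^ n * φ n) (Mfam w))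
    (hp : ∀ z : ℂ, z ≠ 0 → p z = ∑ k ∈ Finset.Icc (-(N : ℤ)) N, c k * z ^ k)
    (f : lp (fun _ : V => ℂ) 2) (a b : ℝ) :
    IntervalIntegrable (fun θ : ℝ => p (conj (Circle.exp θ : ℂ)) • Mfam (Circle.exp θ) f)
      volume a b :=
  lp.intervalIntegrable_of_continuous_apply ENNReal.ofNat_ne_top
    (fun v => by
      simp only [trigPoly_smul_rotate_apply hMfam]
      exact continuous_Gamma _ _ (continuous_trigPoly_conj_circleExp_mul_pow_mul hp) _ _)
    (norm_trigPoly_smul_rotate_le hM hMfam hp f) a b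

lemma circleMean_trigPoly_smul_rotate_apply [Countable V] (hM : IsMultOp T lam φ M)
    (hMfam : ∀ w : Circle, IsMultOp T lam (fun n => (w : ℂ) ^ n * φ n) (Mfam w))
    (hp : ∀ z : ℂ, z ≠ 0 → p z = ∑ k ∈ Finset.Icc (-(N : ℤ)) N, c k * z ^ k)
    {phat : ℕ → ℂ} (hphat : ∀ k : ℕ, phat k = if (k : ℤ) ≤ (N : ℤ) then c (k : ℤ) else 0)
    (f : lp (fun _ : V => ℂ) 2) (v : V) :
    ((2 * Real.pi)⁻¹ • ∫ θ in (0 : ℝ)..2 * Real.pi,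
        p (conj (Circle.exp θ : ℂ)) • Mfam (Circle.exp θ) f) v
      = Gamma T (fun u => (lam u : ℂ)) (fun k => phat k * φ k) f v := by
  have h2π : (2 * Real.pi : ℂ) ≠ 0 := by exact_mod_cast Real.two_pi_pos.ne'
  simp only [lp.coeFn_smul, Pi.smul_apply,
    lp.intervalIntegral_apply (intervalIntegrable_trigPoly_smul_rotate hM hMfam hp f _ _),
    trigPoly_smul_rotate_apply hMfam, intervalIntegral_Gamma _ _ fun k =>
      (continuous_trigPoly_conj_circleExp_mul_pow_mul hp k).intervalIntegrable _ _,
    intervalIntegral.integral_mul_const, integral_trigPoly_conj_circleExp_mul_pow hp, ← hphat,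
    Complex.real_smul, mul_Gamma]
  congr 1
  ext k
  push_cast
  field_simp

lemma norm_circleMean_trigPoly_smul_rotate_le (hM : IsMultOp T lam φ M)
    (hMfam : ∀ w : Circle, IsMultOp T lam (fun n => (w : ℂ) ^ n * φ n) (Mfam w))
    (hp : ∀ z : ℂ, z ≠ 0 → p z = ∑ k ∈ Finset.Icc (-(N : ℤ)) N, c k * z ^ k)
    (f : lp (fun _ : V => ℂ) 2) :
    ‖(2 * Real.pi)⁻¹ • ∫ θ in (0 : ℝ)..2 * Real.pi,
        p (conj (Circle.exp θ : ℂ)) • Mfam (Circle.exp θ) f‖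
      ≤ (∑ j ∈ Finset.Icc (-(N : ℤ)) N, ‖c j‖) * ‖M‖ * ‖f‖ := by
  have h := intervalIntegral.norm_integral_le_of_norm_le_const (a := 0) (b := 2 * Real.pi)
    fun θ _ => norm_trigPoly_smul_rotate_le hM hMfam hp f θ
  rw [sub_zero, abs_of_pos Real.two_pi_pos] at h
  rw [norm_smul, Real.norm_of_nonneg (by positivity)]
  calc _ ≤ (2 * Real.pi)⁻¹ * ((∑ j ∈ Finset.Icc (-(N : ℤ)) N, ‖c j‖) * (‖M‖ * ‖f‖) *
          (2 * Real.pi)) := by gcongr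
    _ = _ := by field_simp

end CircleMean

theorem stmt2_general [Countable V] (T : DirTree V)
    (lam : V → ℝ)
    (φ : ℕ → ℂ)
    (M : lp (fun _ : V => ℂ) 2 →L[ℂ] lp (fun _ : V => ℂ) 2) (hM : IsMultOp T lam φ M)
    (Mfam : ℂ → (lp (fun _ : V => ℂ) 2 →L[ℂ] lp (fun _ : V => ℂ) 2))
    (hMfam : ∀ w : ℂ, ‖w‖ = 1 → IsMultOp T lam (fun n => w ^ n * φ n) (Mfam w))
    (N : ℕ) (c : ℤ → ℂ)
    (p : ℂ → ℂ) (hp : ∀ z : ℂ, z ≠ 0 → p z = ∑ k ∈ Finset.Icc (-(N : ℤ)) (N : ℤ), c k * z ^ k)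
    (phat : ℕ → ℂ) (hphat : ∀ k : ℕ, phat k = if (k : ℤ) ≤ (N : ℤ) then c (k : ℤ) else 0) :
    ∃ Mp : lp (fun _ : V => ℂ) 2 →L[ℂ] lp (fun _ : V => ℂ) 2,
      IsMultOp T lam (fun k => phat k * φ k) Mp ∧
      ∀ f : lp (fun _ : V => ℂ) 2,
        (2 * Real.pi)⁻¹ •
            ∫ θ in (0:ℝ)..(2 * Real.pi),
              p (starRingEnd ℂ (Complex.exp (θ * Complex.I))) •
                Mfam (Complex.exp (θ * Complex.I)) f = Mp f := by
  have hMcircle (w : Circle) : IsMultOp T lam (fun n => (w : ℂ) ^ n * φ n) (Mfam w) :=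
    hMfam w (Circle.norm_coe w)
  obtain ⟨Mp, hMp, hMp_apply⟩ := exists_isMultOp_of_apply_eq _
    (circleMean_trigPoly_smul_rotate_apply hM hMcircle hp hphat) _
    (norm_circleMean_trigPoly_smul_rotate_le hM hMcircle hp)
  exact ⟨Mp, hMp, fun f => (hMp_apply f).symm⟩

/-- Proposition: for a trigonometric polynomial
`p(z) = ∑_{k=-N}^N c_k z^k` and `φ ∈ 𝓜(λ)`, one has `p̂·φ ∈ 𝓜(λ)` and
`∫_𝕋 p(w̄) M_{φ_w} dw = M_{p̂·φ}` (normalized Lebesgue measure, integral in the strong sense). -/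
theorem stmt2 [Countable V] [Infinite V] (T : DirTree V) (hTl : T.Leafless)
    (lam : V → ℝ) (hlam : ∀ v, v ≠ T.root → 0 < lam v)
    (S : lp (fun _ : V => ℂ) 2 →L[ℂ] lp (fun _ : V => ℂ) 2) (hS : IsShift T lam S)
    (φ : ℕ → ℂ)
    (M : lp (fun _ : V => ℂ) 2 →L[ℂ] lp (fun _ : V => ℂ) 2) (hM : IsMultOp T lam φ M)
    (Mfam : ℂ → (lp (fun _ : V => ℂ) 2 →L[ℂ] lp (fun _ : V => ℂ) 2))
    (hMfam : ∀ w : ℂ, ‖w‖ = 1 → IsMultOp T lam (fun n => w ^ n * φ n) (Mfam w))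
    (N : ℕ) (c : ℤ → ℂ)
    (p : ℂ → ℂ) (hp : ∀ z : ℂ, z ≠ 0 → p z = ∑ k ∈ Finset.Icc (-(N : ℤ)) (N : ℤ), c k * z ^ k)
    (phat : ℕ → ℂ) (hphat : ∀ k : ℕ, phat k = if (k : ℤ) ≤ (N : ℤ) then c (k : ℤ) else 0) :
    ∃ Mp : lp (fun _ : V => ℂ) 2 →L[ℂ] lp (fun _ : V => ℂ) 2,
      IsMultOp T lam (fun k => phat k * φ k) Mp ∧
      ∀ f : lp (fun _ : V => ℂ) 2,
        (2 * Real.pi)⁻¹ •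
            ∫ θ in (0:ℝ)..(2 * Real.pi),
              p (starRingEnd ℂ (Complex.exp (θ * Complex.I))) •
                Mfam (Complex.exp (θ * Complex.I)) f = Mp f :=
  stmt2_general T lam φ M hM Mfam hMfam N c p hp phat hphat
end
end

section
/- The set ℳ(λ) = {M_φ̂ : φ̂ ∈ 𝓜(λ)} of bounded multiplication operators is closed in B(ℓ²(V)) in the strong operator topology. -/
open Filter Finset Classical

set_option linter.unusedVariables false
open scoped ComplexConjugate ENNReal

noncomputable section
attribute [local instance] Classical.propDecidable

variable {V : Type*}

/-!
Evaluating a multiplication operator at the root indicator `e_root` gives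
`(M_φ e_root)(v) = λ_{root|v} φ(|v|)`, so the symbol is recovered from `M_φ e_root` by reading it
along a ray `c` with `|c k| = k`. Hence `(M_φ f)(v)` is a continuous function of
`M_φ e_root ∈ ℓ²`; the identity relating `(M f)(v)` and `M e_root` is a closed condition on the
pair `(M f, M e_root)`, so it passes to SOT limits, and the limit `A` is the multiplication
operator whose symbol is read off `A e_root`.
-/

namespace DirTree

lemma depth_iterate_par (T : DirTree V) (v : V) {n : ℕ} (hn : n ≤ T.depth v) :
    T.depth (T.par^[n] v) = T.depth v - n := by
  induction n with
  | zero => simp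
  | succ n ih =>
    have hdepth := ih (by omega)
    have hne : T.par^[n] v ≠ T.root := fun h => by
      have := (T.depth_eq_zero _).mpr h
      omega
    have := T.depth_par _ hne
    rw [Function.iterate_succ_apply']
    omega

lemma iterate_par_eq_root_iff (T : DirTree V) (v : V) {k : ℕ} (hk : k ≤ T.depth v) :
    T.par^[k] v = T.root ↔ k = T.depth v := by
  rw [← T.depth_eq_zero, T.depth_iterate_par v hk]
  omega

lemma Leafless.exists_depth_eq {T : DirTree V} (hT : T.Leafless) (k : ℕ) :
    ∃ v, T.depth v = k := by
  induction k with
  | zero => exact ⟨T.root, (T.depth_eq_zero _).mpr rfl⟩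
  | succ k ih =>
    obtain ⟨u, rfl⟩ := ih
    obtain ⟨v, hv, rfl⟩ := hT u
    exact ⟨v, (T.depth_par v hv).symm⟩

end DirTree

def symbolAlong (T : DirTree V) (lam : V → ℂ) (c : ℕ → V) (g : V → ℂ) (k : ℕ) : ℂ :=
  g (c k) / wProd T lam (c k) k

section

variable {T : DirTree V} {lam : V → ℂ}

lemma wProd_ne_zero (hlam : ∀ v, v ≠ T.root → lam v ≠ 0) {v : V} {k : ℕ}
    (hk : k ≤ T.depth v) : wProd T lam v k ≠ 0 := by
  refine Finset.prod_ne_zero_iff.mpr fun n hn => hlam _ fun h => ?_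
  have hn : n < k := Finset.mem_range.mp hn
  have := (T.iterate_par_eq_root_iff v (k := n) (by omega)).mp h
  omega

lemma Gamma_single_root (φ : ℕ → ℂ) (v : V) :
    Gamma T lam φ (Pi.single T.root 1) v = wProd T lam v (T.depth v) * φ (T.depth v) := by
  rw [Gamma, Finset.sum_eq_single_of_mem _ (Finset.self_mem_range_succ _)]
  · rw [(T.iterate_par_eq_root_iff v le_rfl).mpr rfl, Pi.single_eq_same, mul_one]
  · intro k hk hne
    rw [Pi.single_eq_of_ne (mt (T.iterate_par_eq_root_iff v
      (Nat.lt_succ_iff.mp (Finset.mem_range.mp hk))).mp hne), mul_zero]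

lemma symbolAlong_Gamma_single_root (hlam : ∀ v, v ≠ T.root → lam v ≠ 0) {c : ℕ → V}
    (hc : ∀ k, T.depth (c k) = k) (φ : ℕ → ℂ) :
    symbolAlong T lam c (Gamma T lam φ (Pi.single T.root 1)) = φ := by
  ext k
  rw [symbolAlong, Gamma_single_root, hc, mul_div_cancel_left₀ _
    (wProd_ne_zero hlam (hc k).ge)]

end

lemma IsMultOp.eq_symbolAlong {T : DirTree V} {lam : V → ℝ}
    (hlam : ∀ v, v ≠ T.root → 0 < lam v) {c : ℕ → V} (hc : ∀ k, T.depth (c k) = k) {φ : ℕ → ℂ}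
    {M : lp (fun _ : V => ℂ) 2 →L[ℂ] lp (fun _ : V => ℂ) 2} (hM : IsMultOp T lam φ M) :
    φ = symbolAlong T (fun u => (lam u : ℂ)) c (M (lp.single 2 T.root 1)) := by
  have hMe : ⇑(M (lp.single 2 T.root 1)) =
      Gamma T (fun u => (lam u : ℂ)) φ (Pi.single T.root 1) :=
    funext (hM _)
  rw [hMe, symbolAlong_Gamma_single_root
    (fun v hv => Complex.ofReal_ne_zero.mpr (hlam v hv).ne') hc]

lemma continuous_Gamma_symbolAlong (T : DirTree V) (lam : V → ℂ) (c : ℕ → V) (f : V → ℂ)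
    (v : V) :
    Continuous fun g : lp (fun _ : V => ℂ) 2 => Gamma T lam (symbolAlong T lam c g) f v := by
  refine continuous_finsetSum _ fun k _ => Continuous.mul ?_ continuous_const
  exact continuous_const.mul ((lp.lipschitzWith_one_eval 2 (c k)).continuous.div_const _)

lemma eq_of_forall_exists_dist_lt {F Z : Type*} [PseudoMetricSpace F] [TopologicalSpace Z]
    [T2Space Z] {g h : F → Z} (hg : Continuous g) (hh : Continuous h) {p q : F}
    (H : ∀ ε > 0, ∃ p' q', g p' = h q' ∧ dist p' p < ε ∧ dist q' q < ε) : g p = h q := by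
  have hclosed : IsClosed {x : F × F | g x.1 = h x.2} :=
    isClosed_eq (hg.comp continuous_fst) (hh.comp continuous_snd)
  have hmem : (p, q) ∈ closure {x : F × F | g x.1 = h x.2} :=
    Metric.mem_closure_iff.mpr fun ε hε => by
      obtain ⟨p', q', heq, hp, hq⟩ := H ε hε
      refine ⟨(p', q'), heq, ?_⟩
      rw [Prod.dist_eq, dist_comm p, dist_comm q]
      exact max_lt hp hq
  rw [hclosed.closure_eq] at hmem
  exact hmem

theorem stmt5_general (T : DirTree V) (hTl : T.Leafless)
    (lam : V → ℝ) (hlam : ∀ v, v ≠ T.root → 0 < lam v)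
    (A : lp (fun _ : V => ℂ) 2 →L[ℂ] lp (fun _ : V => ℂ) 2)
    (hA : ∀ ε : ℝ, 0 < ε → ∀ s : Finset (lp (fun _ : V => ℂ) 2),
      ∃ φ : ℕ → ℂ, ∃ M : lp (fun _ : V => ℂ) 2 →L[ℂ] lp (fun _ : V => ℂ) 2,
        IsMultOp T lam φ M ∧ ∀ f ∈ s, ‖M f - A f‖ < ε) :
    ∃ φ : ℕ → ℂ, IsMultOp T lam φ A := by
  choose c hc using hTl.exists_depth_eq
  set e₀ : lp (fun _ : V => ℂ) 2 := lp.single 2 T.root 1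
  refine ⟨symbolAlong T (fun u => (lam u : ℂ)) c (A e₀), fun f v => ?_⟩
  refine eq_of_forall_exists_dist_lt (lp.lipschitzWith_one_eval 2 v).continuous
    (continuous_Gamma_symbolAlong T _ c f v) fun ε hε => ?_
  obtain ⟨φ, M, hM, hMA⟩ := hA ε hε {f, e₀}
  refine ⟨M f, M e₀, ?_, ?_, ?_⟩
  · rw [hM f v, ← hM.eq_symbolAlong hlam hc]
  · simpa [dist_eq_norm] using hMA f
  · simpa [dist_eq_norm] using hMA e₀

/-- Proposition: the set `ℳ(λ)` of bounded multiplication operators is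
closed in the strong operator topology: any bounded operator `A` each of whose SOT-basic
neighborhoods contains a multiplication operator is itself a multiplication operator. -/
theorem stmt5 [Countable V] [Infinite V] (T : DirTree V) (hTl : T.Leafless)
    (lam : V → ℝ) (hlam : ∀ v, v ≠ T.root → 0 < lam v)
    (S : lp (fun _ : V => ℂ) 2 →L[ℂ] lp (fun _ : V => ℂ) 2) (hS : IsShift T lam S)
    (A : lp (fun _ : V => ℂ) 2 →L[ℂ] lp (fun _ : V => ℂ) 2)
    (hA : ∀ ε : ℝ, 0 < ε → ∀ s : Finset (lp (fun _ : V => ℂ) 2),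
      ∃ φ : ℕ → ℂ, ∃ M : lp (fun _ : V => ℂ) 2 →L[ℂ] lp (fun _ : V => ℂ) 2,
        IsMultOp T lam φ M ∧ ∀ f ∈ s, ‖M f - A f‖ < ε) :
    ∃ φ : ℕ → ℂ, IsMultOp T lam φ A :=
  stmt5_general T hTl lam hlam A hA
end
end
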